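/- Converse direction of the solvability criterion: if for every f ∈ K there exists u_f ∈ H with ⟨u_f, Tv⟩ = ⟨f, v⟩ for all v ∈ D, then there exists a constant C such that ‖v‖_{K₋} ≤ C‖Tv‖_{H₋} for all v ∈ D with Tv ≠ 0. (Proved via the Banach–Steinhaus uniform boundedness principle.) -/

import Mathlib

/-!
Every `v ∈ D` with `‖T v‖_{H₋} ≠ 0` gives the functional `f ↦ ⟪jK f, v⟫ / ‖T v‖_{H₋}` on `K`,
whose norm is `‖v‖_{K₋} / ‖T v‖_{H₋}`. At a fixed `f` the weak solution `u_f` rewrites its value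
as `⟪jH u_f, T v⟫ / ‖T v‖_{H₋}`, which is at most `‖u_f‖` in absolute value; by the uniform
boundedness principle on the Banach space `K` the norms of these functionals are bounded.
-/

open scoped RealInnerProductSpace

/-- The negative norm `‖w‖₋ = sup {|⟪j z, w⟫_X| : z, ‖z‖ ≤ 1}` associated to a
continuous embedding `j` of a Hilbert space into `X`. -/
noncomputable def negNorm {H X : Type*} [NormedAddCommGroup H] [InnerProductSpace ℝ H]
    [NormedAddCommGroup X] [InnerProductSpace ℝ X] (j : H →L[ℝ] X) (w : X) : ℝ :=
  sSup {r : ℝ | ∃ z : H, ‖z‖ ≤ 1 ∧ r = |⟪j z, w⟫|}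

section NegNorm

variable {H X : Type*} [NormedAddCommGroup H] [InnerProductSpace ℝ H]
  [NormedAddCommGroup X] [InnerProductSpace ℝ X]

theorem negNorm_eq_norm_innerSL_comp (j : H →L[ℝ] X) (w : X) :
    negNorm j w = ‖(innerSL ℝ w).comp j‖ := by
  rw [← ContinuousLinearMap.sSup_unitClosedBall_eq_norm, negNorm]
  congr 1
  ext r
  simp [eq_comm, real_inner_comm]

theorem negNorm_nonneg (j : H →L[ℝ] X) (w : X) : 0 ≤ negNorm j w :=
  negNorm_eq_norm_innerSL_comp j w ▸ norm_nonneg _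

theorem abs_inner_le_mul_negNorm (j : H →L[ℝ] X) (u : H) (w : X) :
    |⟪j u, w⟫| ≤ ‖u‖ * negNorm j w := by
  rw [negNorm_eq_norm_innerSL_comp, mul_comm, real_inner_comm, ← Real.norm_eq_abs]
  exact ((innerSL ℝ w).comp j).le_opNorm u

end NegNorm

theorem ContinuousLinearMap.exists_norm_le_mul_of_forall_norm_apply_le_mul
    {E F ι : Type*} [NormedAddCommGroup E] [NormedSpace ℝ E] [CompleteSpace E]
    [NormedAddCommGroup F] [NormedSpace ℝ F] {g : ι → E →L[ℝ] F} {N : ι → ℝ}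
    (hN : ∀ i, 0 < N i) (h : ∀ x, ∃ c, ∀ i, ‖g i x‖ ≤ c * N i) :
    ∃ C, ∀ i, ‖g i‖ ≤ C * N i := by
  have hscaled : ∀ i (a b : ℝ), (N i)⁻¹ * a ≤ b ↔ a ≤ b * N i := fun i a b => by
    rw [inv_mul_le_iff₀ (hN i), mul_comm]
  have hinv : ∀ i, 0 ≤ (N i)⁻¹ := fun i => inv_nonneg.2 (hN i).le
  obtain ⟨C, hC⟩ := banach_steinhaus (g := fun i => (N i)⁻¹ • g i) fun x => by
    obtain ⟨c, hc⟩ := h x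
    refine ⟨c, fun i => ?_⟩
    change ‖(N i)⁻¹ • g i x‖ ≤ c
    rw [norm_smul_of_nonneg (hinv i), hscaled]
    exact hc i
  refine ⟨C, fun i => ?_⟩
  rw [← hscaled, ← norm_smul_of_nonneg (hinv i)]
  exact hC i

theorem solvability_converse_general
    {X H K : Type*} [NormedAddCommGroup X] [InnerProductSpace ℝ X]
    [NormedAddCommGroup H] [InnerProductSpace ℝ H]
    [NormedAddCommGroup K] [InnerProductSpace ℝ K] [CompleteSpace K]
    (jH : H →L[ℝ] X) (jK : K →L[ℝ] X)
    (D : Submodule ℝ X) (T : D →ₗ[ℝ] X)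
    (hsolve : ∀ f : K, ∃ u : H, ∀ v : D, ⟪jH u, T v⟫ = ⟪jK f, (v : X)⟫) :
    ∃ C : ℝ, ∀ v : D, negNorm jH (T v) ≠ 0 →
      negNorm jK (v : X) ≤ C * negNorm jH (T v) := by
  let ι := {v : D // negNorm jH (T v) ≠ 0}
  have hpos : ∀ v : ι, 0 < negNorm jH (T v.1) := fun v =>
    (negNorm_nonneg jH _).lt_of_ne' v.2
  have hbound : ∀ f : K, ∃ c, ∀ v : ι,
      ‖(innerSL ℝ (v.1 : X)).comp jK f‖ ≤ c * negNorm jH (T v.1) := fun f => by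
    obtain ⟨u, hu⟩ := hsolve f
    refine ⟨‖u‖, fun v => ?_⟩
    calc ‖(innerSL ℝ (v.1 : X)).comp jK f‖ = |⟪jH u, T v.1⟫| := by
          simp [hu, real_inner_comm]
      _ ≤ ‖u‖ * negNorm jH (T v.1) := abs_inner_le_mul_negNorm jH u _
  obtain ⟨C, hC⟩ :=
    ContinuousLinearMap.exists_norm_le_mul_of_forall_norm_apply_le_mul hpos hbound
  exact ⟨C, fun v hv => (negNorm_eq_norm_innerSL_comp jK v).trans_le (hC ⟨v, hv⟩)⟩

/-- Converse direction of the solvability criterion: if for every `f ∈ K` there is a weak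
solution `u_f ∈ H` of `⟪u_f, T v⟫ = ⟪f, v⟫` for all `v ∈ D`, then there is a constant `C`
with `‖v‖_{K₋} ≤ C ‖T v‖_{H₋}` for all `v ∈ D` with `‖T v‖_{H₋} ≠ 0`. -/
theorem solvability_converse
    {X H K : Type*} [NormedAddCommGroup X] [InnerProductSpace ℝ X]
    [NormedAddCommGroup H] [InnerProductSpace ℝ H] [CompleteSpace H]
    [NormedAddCommGroup K] [InnerProductSpace ℝ K] [CompleteSpace K]
    (jH : H →L[ℝ] X) (jK : K →L[ℝ] X)
    (hH : DenseRange jH) (hK : DenseRange jK)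
    (D : Submodule ℝ X) (T : D →ₗ[ℝ] X)
    (hsolve : ∀ f : K, ∃ u : H, ∀ v : D, ⟪jH u, T v⟫ = ⟪jK f, (v : X)⟫) :
    ∃ C : ℝ, ∀ v : D, negNorm jH (T v) ≠ 0 →
      negNorm jK (v : X) ≤ C * negNorm jH (T v) :=
  solvability_converse_general jH jK D T hsolve
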